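/- arXiv:0910.2247 — 2 statements merged into one kernel-verified Lean document; each statement's English description precedes it below -/
import Mathlib

section
/- For all real numbers X, (S(X) - S(0))^2 ≤ S(X^2) - S(0), where S(z) = 1/(1+e^{-z}) is the logistic sigmoid. In particular, for all x, λ ∈ ℝ, (S(λx) - 1/2)^2 ≤ S(λ²x²) - 1/2. -/
noncomputable def S (z : ℝ) : ℝ := 1 / (1 + Real.exp (-z))

/-!
Write `σ` for the sigmoid and `Y = X²`. Since `σ' = σ (1 - σ) ≤ 1/4` and `0 < σ < 1`, the left-hand
side is at most `min (Y/16) (1/4)`. On the other hand `e^{-Y} (1 + Y) ≤ 1` gives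
`σ Y - 1/2 ≥ Y / (2 (Y + 2))`, which is at least `Y/16` for `Y ≤ 6` and at least `1/4` for `Y ≥ 2`.
-/

namespace Real

lemma sigmoid_mul_one_sub_sigmoid_le (x : ℝ) : sigmoid x * (1 - sigmoid x) ≤ 1 / 4 := by
  nlinarith [sq_nonneg (sigmoid x - 1 / 2)]

lemma abs_sigmoid_sub_sigmoid_le (x y : ℝ) : |sigmoid x - sigmoid y| ≤ |x - y| / 4 := by
  have h := convex_univ.norm_image_sub_le_of_norm_deriv_le (f := sigmoid) (C := 1 / 4)
    (fun z _ ↦ differentiableAt_sigmoid) (fun z _ ↦ ?_) (Set.mem_univ y) (Set.mem_univ x)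
  · simpa [div_eq_inv_mul] using h
  · rw [deriv_sigmoid, Real.norm_eq_abs,
      abs_of_nonneg (mul_nonneg (sigmoid_nonneg z) (sub_nonneg.2 (sigmoid_le_one z)))]
    exact sigmoid_mul_one_sub_sigmoid_le z

lemma abs_sigmoid_sub_half_lt (x : ℝ) : |sigmoid x - 1 / 2| < 1 / 2 :=
  abs_sub_lt_iff.2 ⟨by linarith [sigmoid_lt_one x], by linarith [sigmoid_pos x]⟩

lemma div_le_sigmoid_sub_half {y : ℝ} (hy : 0 ≤ y) : y / (2 * (y + 2)) ≤ sigmoid y - 1 / 2 := by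
  have he : exp (-y) * (y + 1) ≤ 1 := by
    calc exp (-y) * (y + 1) ≤ exp (-y) * exp y := by gcongr; exact add_one_le_exp y
      _ = 1 := by rw [← exp_add, neg_add_cancel, exp_zero]
  have hpos : 0 < 1 + exp (-y) := by positivity
  rw [sigmoid_def, div_le_iff₀ (by positivity)]
  field_simp
  nlinarith

lemma sq_sigmoid_sub_half_le (x : ℝ) : (sigmoid x - 1 / 2) ^ 2 ≤ sigmoid (x ^ 2) - 1 / 2 := by
  have hlip : (sigmoid x - 1 / 2) ^ 2 ≤ x ^ 2 / 16 := by
    have := abs_sigmoid_sub_sigmoid_le x 0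
    rw [sigmoid_zero, sub_zero] at this
    nlinarith [sq_abs (sigmoid x - 2⁻¹), sq_abs x, abs_nonneg (sigmoid x - 2⁻¹)]
  have hbdd : (sigmoid x - 1 / 2) ^ 2 ≤ 1 / 4 := by
    nlinarith [sq_abs (sigmoid x - 1 / 2), abs_sigmoid_sub_half_lt x,
      abs_nonneg (sigmoid x - 1 / 2)]
  have hlow := div_le_sigmoid_sub_half (sq_nonneg x)
  refine le_trans ?_ hlow
  rw [le_div_iff₀ (by positivity)]
  rcases le_total (x ^ 2) 6 with h | h <;> nlinarith [sq_nonneg x]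

end Real

/-- For all real `X`, `(S X - S 0)^2 ≤ S (X^2) - S 0`; in particular, for all `x, l`,
`(S (l*x) - 1/2)^2 ≤ S (l^2 * x^2) - 1/2`. -/
theorem sigmoid_sq_ineq :
    (∀ X : ℝ, (S X - S 0) ^ 2 ≤ S (X ^ 2) - S 0) ∧
    (∀ x l : ℝ, (S (l * x) - 1 / 2) ^ 2 ≤ S (l ^ 2 * x ^ 2) - 1 / 2) := by
  have hS : S = Real.sigmoid := funext fun z ↦ by rw [S, Real.sigmoid_def, one_div]
  have hS0 : S 0 = 1 / 2 := by rw [hS, Real.sigmoid_zero, one_div]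
  refine ⟨fun X ↦ ?_, fun x l ↦ ?_⟩
  · rw [hS0, hS]
    exact Real.sq_sigmoid_sub_half_le X
  · rw [← mul_pow, hS]
    exact Real.sq_sigmoid_sub_half_le (l * x)
end

section
/- Let p ∈ ℕ, x₁,…,x_p ∈ ℝ, and λ ≥ 0. Then Σᵢ (S(λxᵢ) - 1/2)² ≤ p·S₀((λ²/p)·Σᵢ xᵢ²), where S₀(x) = S(x) - 1/2. (This combines the pointwise inequality (S(λx)-1/2)² ≤ S₀(λ²x²) with Jensen's inequality for the concave function S₀ on ℝ₊.) -/
/-- The shifted sigmoid `S₀(x) = S x - 1/2`. -/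
noncomputable def S₀ (z : ℝ) : ℝ := S z - 1 / 2

open Real Set Finset

/-- For empty `t` both sides vanish, as `(0 : ℝ)⁻¹ = 0`. -/
lemma ConcaveOn.sum_le_card_smul_map_average {E ι : Type*} [AddCommGroup E] [Module ℝ E]
    {s : Set E} {f : E → ℝ} (hf : ConcaveOn ℝ s f) (t : Finset ι) {y : ι → E}
    (hy : ∀ i ∈ t, y i ∈ s) :
    ∑ i ∈ t, f (y i) ≤ #t * f ((#t : ℝ)⁻¹ • ∑ i ∈ t, y i) := by
  rcases t.eq_empty_or_nonempty with rfl | ht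
  · simp
  have hcard : (0 : ℝ) < #t := by exact_mod_cast ht.card_pos
  have hjensen := hf.le_map_sum (t := t) (w := fun _ ↦ (#t : ℝ)⁻¹) (p := y)
    (fun _ _ ↦ by positivity) (by simp [hcard.ne']) hy
  rw [← smul_sum, ← smul_sum, smul_eq_mul] at hjensen
  calc ∑ i ∈ t, f (y i) = #t * ((#t : ℝ)⁻¹ * ∑ i ∈ t, f (y i)) := by field_simp
    _ ≤ #t * f ((#t : ℝ)⁻¹ • ∑ i ∈ t, y i) := by gcongr

lemma ConcaveOn.mul_map_le_map_mul {f : ℝ → ℝ} (hf : ConcaveOn ℝ (Ici 0) f) (h₀ : 0 ≤ f 0)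
    {t x : ℝ} (ht₀ : 0 ≤ t) (ht₁ : t ≤ 1) (hx : 0 ≤ x) : t * f x ≤ f (t * x) := by
  have h := hf.2 (mem_Ici.2 hx) (mem_Ici.2 le_rfl) ht₀ (sub_nonneg.2 ht₁) (by ring)
  simp only [smul_eq_mul, mul_zero, add_zero] at h
  nlinarith

lemma S_eq_sigmoid : S = sigmoid := by
  funext z
  simp [S, sigmoid_def]

lemma S₀_eq_sigmoid_sub (z : ℝ) : S₀ z = sigmoid z - 1 / 2 := by
  rw [S₀, S_eq_sigmoid]

lemma S₀_zero : S₀ 0 = 0 := by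
  norm_num [S₀_eq_sigmoid_sub, sigmoid_zero]

lemma S₀_neg (z : ℝ) : S₀ (-z) = -S₀ z := by
  simp only [S₀_eq_sigmoid_sub, sigmoid_neg]
  ring

lemma S₀_monotone : Monotone S₀ := fun _ _ h ↦ by
  simpa only [S₀_eq_sigmoid_sub, sub_le_sub_iff_right] using sigmoid_monotone h

lemma S₀_nonneg {z : ℝ} (hz : 0 ≤ z) : 0 ≤ S₀ z :=
  S₀_zero ▸ S₀_monotone hz

lemma S₀_le_half (z : ℝ) : S₀ z ≤ 1 / 2 := by
  linarith [S₀_eq_sigmoid_sub z, sigmoid_le_one z]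

lemma S₀_le_self {z : ℝ} (hz : 0 ≤ z) : S₀ z ≤ z := by
  have hexp : 1 - z ≤ exp (-z) := by linarith [add_one_le_exp (-z)]
  have hpos : 0 < exp (-z) := exp_pos (-z)
  rw [S₀, S, sub_le_iff_le_add, div_le_iff₀ (by positivity)]
  nlinarith

lemma hasDerivAt_S₀ (z : ℝ) : HasDerivAt S₀ (1 / 4 - S₀ z ^ 2) z := by
  have h : HasDerivAt (fun w ↦ sigmoid w - 1 / 2) (sigmoid z * (1 - sigmoid z)) z :=
    (hasDerivAt_sigmoid z).sub_const _
  rw [← funext S₀_eq_sigmoid_sub] at h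
  exact h.congr_deriv (by rw [S₀_eq_sigmoid_sub]; ring)

lemma concaveOn_S₀ : ConcaveOn ℝ (Ici 0) S₀ := by
  have hdiff : Differentiable ℝ S₀ := fun z ↦ (hasDerivAt_S₀ z).differentiableAt
  refine AntitoneOn.concaveOn_of_deriv (convex_Ici 0) hdiff.continuous.continuousOn
    hdiff.differentiableOn ?_
  intro a ha b _ hab
  rw [interior_Ici] at ha
  simp only [(hasDerivAt_S₀ _).deriv]
  gcongr
  · exact S₀_nonneg (le_of_lt ha)
  · exact S₀_monotone hab

lemma sq_S₀_le_S₀_sq (t : ℝ) : S₀ t ^ 2 ≤ S₀ (t ^ 2) := by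
  wlog ht : 0 ≤ t with H
  · simpa [S₀_neg] using H (-t) (by linarith)
  have hS₀ : 0 ≤ S₀ t := S₀_nonneg ht
  rcases le_total t 1 with ht₁ | ht₁
  · have hscale : t * S₀ t ≤ S₀ (t ^ 2) :=
      sq t ▸ concaveOn_S₀.mul_map_le_map_mul S₀_zero.ge ht ht₁ ht
    nlinarith [S₀_le_self ht]
  · have hmono : S₀ t ≤ S₀ (t ^ 2) := S₀_monotone (by nlinarith)
    nlinarith [S₀_le_half t]

theorem sigmoid_sum_jensen_general (p : ℕ) (x : Fin p → ℝ) (l : ℝ) :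
    ∑ i, (S (l * x i) - 1 / 2) ^ 2 ≤
      (p : ℝ) * S₀ (l ^ 2 / (p : ℝ) * ∑ i, (x i) ^ 2) := by
  calc ∑ i, (S (l * x i) - 1 / 2) ^ 2
      ≤ ∑ i, S₀ ((l * x i) ^ 2) := sum_le_sum fun i _ ↦ sq_S₀_le_S₀_sq (l * x i)
    _ ≤ p * S₀ ((p : ℝ)⁻¹ * ∑ i, (l * x i) ^ 2) := by
        simpa using concaveOn_S₀.sum_le_card_smul_map_average (univ : Finset (Fin p))
          fun i _ ↦ mem_Ici.2 (sq_nonneg (l * x i))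
    _ = p * S₀ (l ^ 2 / p * ∑ i, x i ^ 2) := by
        simp only [mul_pow, ← mul_sum]
        ring_nf

/-- For `x₁,…,x_p` and `l ≥ 0`,
`∑ i, (S (l * xᵢ) - 1/2)² ≤ p * S₀ ((l²/p) * ∑ i, xᵢ²)`. -/
theorem sigmoid_sum_jensen (p : ℕ) (hp : 0 < p) (x : Fin p → ℝ) (l : ℝ) (hl : 0 ≤ l) :
    ∑ i, (S (l * x i) - 1 / 2) ^ 2 ≤
      (p : ℝ) * S₀ (l ^ 2 / (p : ℝ) * ∑ i, (x i) ^ 2) :=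
  sigmoid_sum_jensen_general p x l
end
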